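/- Let ν be a probability measure on a compact interval [χ_1, χ_2], let μ be a finite positive measure on [χ_1, χ_2] with Lebesgue decomposition dμ = g dν + dμ_s (μ_s singular w.r.t. ν), and let a > 0. Define Ĩ(μ) = ∫ (j_a(g) − g) dν + μ([χ_1, χ_2]) where j_a(x) = x − a − a log(x/a) for x > 0, j_a(x) = +∞ otherwise. Then for a probability measure ξ on [χ_1, χ_2], inf_{b > 0} Ĩ(b·ξ) = a·K(ν | ξ), the reversed Kullback information. -/

import Mathlib

open MeasureTheory Classical ENNReal

/-- `j_a(x) = x - a - a·log(x/a)` for `x > 0`, `+∞` otherwise (as an extended real). -/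
noncomputable def jaE (a x : ℝ) : ℝ≥0∞ :=
  if 0 < x then ENNReal.ofReal (x - a - a * Real.log (x / a)) else ⊤

/-- `Ĩ(μ) = ∫ (j_a(g) - g) dν + μ(univ)` where `dμ = g dν + dμ_s` is the Lebesgue
decomposition of `μ` with respect to `ν` (written here as
`∫ j_a(g) dν + (μ(univ) - ∫ g dν)`, the last term being the singular mass). -/
noncomputable def Itilde (a : ℝ) (ν μ : Measure ℝ) : ℝ≥0∞ :=
  ∫⁻ t, jaE a ((μ.rnDeriv ν t).toReal) ∂ν + (μ Set.univ - ∫⁻ t, μ.rnDeriv ν t ∂ν)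

/-- Reversed Kullback information `K(ν|ξ) = ∫ log(dν/dξ) dν` if `ν ≪ ξ` and the
log-likelihood ratio is integrable, `+∞` otherwise. -/
noncomputable def kullbackE (P Q : Measure ℝ) : ℝ≥0∞ :=
  if P ≪ Q ∧ Integrable (llr P Q) P then ENNReal.ofReal (∫ x, llr P Q x ∂P) else ⊤

/-!
Write `g = dξ/dν`; the density of `b • ξ` with respect to `ν` is `b g`, and
`j_a(b g) = j_a(b) + b (g - 1) - a log g`. If `ν ≪ ξ`, then `-log g = log (dν/dξ)` `ν`-a.e., so
integrating gives `j_a(b) + b (∫ g dν - 1) + a K(ν|ξ)`, and the singular mass `b (1 - ∫ g dν)`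
cancels the middle term: `Ĩ(b • ξ) = j_a(b) + a K(ν|ξ)`. The same identity holds when
`K(ν|ξ) = ∞`: either `g = 0` (where `j_a = ∞`) on a set of positive `ν`-measure, or the
log-likelihood ratio, hence `j_a(b g)`, is not integrable. Since `j_a ≥ 0` and `j_a(a) = 0`,
the infimum over `b` is `a K(ν|ξ)`.
-/

open Real

noncomputable def ja (a x : ℝ) : ℝ := x - a - a * log (x / a)

variable {a b x : ℝ}

lemma jaE_of_pos (hx : 0 < x) : jaE a x = ENNReal.ofReal (ja a x) := if_pos hx

lemma jaE_zero (a : ℝ) : jaE a 0 = ⊤ := if_neg (lt_irrefl 0)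

lemma measurable_jaE (a : ℝ) : Measurable (jaE a) :=
  Measurable.ite measurableSet_Ioi (by fun_prop) measurable_const

lemma ja_nonneg (ha : 0 < a) (hx : 0 < x) : 0 ≤ ja a x := by
  have h := mul_le_mul_of_nonneg_left (log_le_sub_one_of_pos (div_pos hx ha)) ha.le
  rw [mul_sub, mul_div_cancel₀ x ha.ne', mul_one] at h
  rw [ja]
  linarith

lemma ja_self (ha : 0 < a) : ja a a = 0 := by
  simp [ja, div_self ha.ne']

lemma ja_mul (ha : 0 < a) (hb : 0 < b) (hx : 0 < x) :
    ja a (b * x) = ja a b + b * (x - 1) - a * log x := by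
  rw [ja, ja, mul_comm b x, mul_div_assoc, log_mul hx.ne' (div_pos hb ha).ne']
  ring

lemma iInf_jaE_add (ha : 0 < a) (c : ℝ≥0∞) : ⨅ b : {b : ℝ // 0 < b}, jaE a b + c = c :=
  le_antisymm (iInf_le_of_le ⟨a, ha⟩ (by rw [jaE_of_pos ha, ja_self ha, ofReal_zero, zero_add]))
    (le_iInf fun _ => le_add_self)

lemma absolutelyContinuous_of_ae_rnDeriv_ne_zero {α : Type*} [MeasurableSpace α]
    {μ ν : Measure α} (h : ∀ᵐ t ∂ν, μ.rnDeriv ν t ≠ 0) : ν ≪ μ :=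
  (withDensity_absolutelyContinuous' (Measure.measurable_rnDeriv μ ν).aemeasurable h).trans
    (Measure.absolutelyContinuous_of_le (Measure.withDensity_rnDeriv_le μ ν))

variable {ν ξ : Measure ℝ}

lemma Itilde_ofReal_smul [IsFiniteMeasure ξ] [SigmaFinite ν] (hb : 0 ≤ b) :
    Itilde a ν (ENNReal.ofReal b • ξ) = ∫⁻ t, jaE a (b * (ξ.rnDeriv ν t).toReal) ∂ν
      + ENNReal.ofReal b * (ξ Set.univ - ∫⁻ t, ξ.rnDeriv ν t ∂ν) := by
  have hsmul := Measure.rnDeriv_smul_left_of_ne_top ξ ν (ofReal_ne_top (r := b))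
  rw [Itilde, lintegral_congr_ae hsmul]
  simp only [Pi.smul_apply, smul_eq_mul, Measure.smul_apply]
  rw [lintegral_const_mul _ (Measure.measurable_rnDeriv ξ ν),
    ENNReal.mul_sub fun _ _ => ofReal_ne_top]
  congr 1
  refine lintegral_congr_ae (hsmul.mono fun t ht => ?_)
  simp only [ht, Pi.smul_apply, smul_eq_mul, toReal_mul, toReal_ofReal hb]

lemma lintegral_jaE_eq_top_of_not_ac [IsFiniteMeasure ξ] [SigmaFinite ν] (hac : ¬ ν ≪ ξ) :
    ∫⁻ t, jaE a (b * (ξ.rnDeriv ν t).toReal) ∂ν = ⊤ := by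
  refine lintegral_eq_top_of_measure_eq_top_ne_zero ?_ fun h0 => hac ?_
  · exact ((measurable_jaE a).comp
      ((Measure.measurable_rnDeriv ξ ν).ennreal_toReal.const_mul b)).aemeasurable
  refine absolutelyContinuous_of_ae_rnDeriv_ne_zero
    (ae_iff.mpr (measure_mono_null (fun t ht => ?_) h0))
  simp [not_not.mp ht, jaE_zero]

lemma ae_jaE_mul_rnDeriv_eq [SigmaFinite ξ] [SigmaFinite ν] (ha : 0 < a) (hb : 0 < b)
    (hac : ν ≪ ξ) : ∀ᵐ t ∂ν,
      jaE a (b * (ξ.rnDeriv ν t).toReal)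
        = ENNReal.ofReal (ja a b + b * ((ξ.rnDeriv ν t).toReal - 1) + a * llr ν ξ t)
      ∧ 0 ≤ ja a b + b * ((ξ.rnDeriv ν t).toReal - 1) + a * llr ν ξ t := by
  filter_upwards [Measure.rnDeriv_pos' hac, Measure.rnDeriv_lt_top ξ ν, neg_llr hac]
    with t hpos hlt hllr
  have hg : 0 < (ξ.rnDeriv ν t).toReal := toReal_pos hpos.ne' hlt.ne
  have hψ : ja a b + b * ((ξ.rnDeriv ν t).toReal - 1) + a * llr ν ξ t
      = ja a (b * (ξ.rnDeriv ν t).toReal) := by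
    rw [ja_mul ha hb hg, ← llr, ← hllr, Pi.neg_apply]
    ring
  rw [hψ, jaE_of_pos (mul_pos hb hg)]
  exact ⟨rfl, ja_nonneg ha (mul_pos hb hg)⟩

lemma lintegral_jaE_eq_top_of_not_integrable [IsFiniteMeasure ξ] [IsFiniteMeasure ν]
    (ha : 0 < a) (hb : 0 < b) (hac : ν ≪ ξ) (hint : ¬ Integrable (llr ν ξ) ν) :
    ∫⁻ t, jaE a (b * (ξ.rnDeriv ν t).toReal) ∂ν = ⊤ := by
  have h := ae_jaE_mul_rnDeriv_eq ha hb hac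
  rw [lintegral_congr_ae (h.mono fun _ => And.left)]
  by_contra hne
  have hmeas : Measurable fun t => ja a b + b * ((ξ.rnDeriv ν t).toReal - 1) + a * llr ν ξ t := by
    have := Measure.measurable_rnDeriv ξ ν
    have := measurable_llr ν ξ
    fun_prop
  have hψ := (lintegral_ofReal_ne_top_iff_integrable hmeas.aestronglyMeasurable
    (h.mono fun _ => And.right)).mp hne
  have hg : Integrable (fun t => ja a b + b * ((ξ.rnDeriv ν t).toReal - 1)) ν :=
    (integrable_const _).add
      ((Measure.integrable_toReal_rnDeriv.sub (integrable_const 1)).const_mul b)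
  exact hint ((integrable_const_mul_iff (isUnit_iff_ne_zero.mpr ha.ne') _).mp
    ((integrable_add_iff_integrable_right' hg).mp hψ))

lemma lintegral_rnDeriv_eq_ofReal_integral {α : Type*} [MeasurableSpace α] {μ ν : Measure α}
    [IsFiniteMeasure μ] :
    ∫⁻ t, μ.rnDeriv ν t ∂ν = ENNReal.ofReal (∫ t, (μ.rnDeriv ν t).toReal ∂ν) := by
  rw [integral_toReal (Measure.measurable_rnDeriv μ ν).aemeasurable (Measure.rnDeriv_lt_top μ ν),
    ofReal_toReal (Measure.lintegral_rnDeriv_lt_top μ ν).ne]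

lemma Itilde_ofReal_smul_of_integrable [IsProbabilityMeasure ξ] [IsProbabilityMeasure ν]
    (ha : 0 < a) (hb : 0 < b) (hac : ν ≪ ξ) (hint : Integrable (llr ν ξ) ν) :
    Itilde a ν (ENNReal.ofReal b • ξ) = ENNReal.ofReal (ja a b + a * ∫ t, llr ν ξ t ∂ν) := by
  have h := ae_jaE_mul_rnDeriv_eq ha hb hac
  have hg₁ : Integrable (fun t => b * ((ξ.rnDeriv ν t).toReal - 1)) ν :=
    (Measure.integrable_toReal_rnDeriv.sub (integrable_const 1)).const_mul b
  have hg : Integrable (fun t => ja a b + b * ((ξ.rnDeriv ν t).toReal - 1)) ν :=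
    (integrable_const _).add hg₁
  have hψ : Integrable (fun t => ja a b + b * ((ξ.rnDeriv ν t).toReal - 1) + a * llr ν ξ t) ν :=
    hg.add (hint.const_mul a)
  have hψ_integral : ∫ t, ja a b + b * ((ξ.rnDeriv ν t).toReal - 1) + a * llr ν ξ t ∂ν
      = ja a b + b * (∫ t, (ξ.rnDeriv ν t).toReal ∂ν - 1) + a * ∫ t, llr ν ξ t ∂ν := by
    rw [integral_add hg (hint.const_mul a), integral_const_mul,
      integral_add (integrable_const _) hg₁, integral_const_mul,
      integral_sub Measure.integrable_toReal_rnDeriv (integrable_const 1)]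
    simp
  have hc1 : ∫ t, (ξ.rnDeriv ν t).toReal ∂ν ≤ 1 := by
    rw [Measure.integral_toReal_rnDeriv', probReal_univ]
    linarith [measureReal_nonneg (μ := ξ.singularPart ν) (s := Set.univ)]
  rw [Itilde_ofReal_smul hb.le, lintegral_congr_ae (h.mono fun _ => And.left),
    ← ofReal_integral_eq_lintegral_ofReal hψ (h.mono fun _ => And.right),
    measure_univ, lintegral_rnDeriv_eq_ofReal_integral, ← ofReal_one,
    ← ofReal_sub _ (integral_nonneg fun _ => toReal_nonneg), ← ofReal_mul hb.le,
    ← ofReal_add (integral_nonneg_of_ae (h.mono fun _ => And.right))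
      (mul_nonneg hb.le (by linarith)), hψ_integral]
  congr 1
  ring

lemma Itilde_ofReal_smul_eq_jaE_add_kullbackE [IsProbabilityMeasure ξ] [IsProbabilityMeasure ν]
    (ha : 0 < a) (hb : 0 < b) :
    Itilde a ν (ENNReal.ofReal b • ξ) = jaE a b + ENNReal.ofReal a * kullbackE ν ξ := by
  by_cases hfin : ν ≪ ξ ∧ Integrable (llr ν ξ) ν
  · obtain ⟨hac, hint⟩ := hfin
    have hgibbs : 0 ≤ ∫ t, llr ν ξ t ∂ν := by
      simpa using InformationTheory.integral_llr_add_sub_measure_univ_nonneg hac hint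
    rw [Itilde_ofReal_smul_of_integrable ha hb hac hint, kullbackE, if_pos ⟨hac, hint⟩,
      jaE_of_pos hb, ← ofReal_mul ha.le, ← ofReal_add (ja_nonneg ha hb) (mul_nonneg ha.le hgibbs)]
  · have htop : ∫⁻ t, jaE a (b * (ξ.rnDeriv ν t).toReal) ∂ν = ⊤ := by
      by_cases hac : ν ≪ ξ
      · exact lintegral_jaE_eq_top_of_not_integrable ha hb hac fun hint => hfin ⟨hac, hint⟩
      · exact lintegral_jaE_eq_top_of_not_ac hac
    rw [Itilde_ofReal_smul hb.le, htop, kullbackE, if_neg hfin, top_add,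
      mul_top (ofReal_pos.mpr ha).ne', add_top]

theorem inf_Itilde_eq_reversed_kullback
    (a : ℝ) (ha : 0 < a)
    (ν ξ : Measure ℝ) [IsProbabilityMeasure ν] [IsProbabilityMeasure ξ] :
    (⨅ b : {b : ℝ // 0 < b}, Itilde a ν (ENNReal.ofReal b.1 • ξ))
      = ENNReal.ofReal a * kullbackE ν ξ := by
  simp_rw [Itilde_ofReal_smul_eq_jaE_add_kullbackE ha (Subtype.prop _)]
  exact iInf_jaE_add ha _
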